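/- Let (L,▷) be a pre-Lie algebra, U its universal enveloping algebra, ρ : U → End(L) the algebra-morphism extension of a ↦ a▷·, and ⋆ the Guin–Oudom action. Then the generalized Leibniz rule holds: U·a = Σ U₍₂₎ ⋆ (ρ(U₍₁₎)a) for all a ∈ L and U ∈ U, where the sum is over the coproduct of U. -/

import Mathlib

/-!
The map `u ↦ Σ u₍₂₎ ⋆ (ρ(u₍₁₎) a)` is left `U`-linear: for a generator `x = ι b`,
`Δ x = x ⊗ 1 + 1 ⊗ x` and the recursion `(x V) ⋆ c = x (V ⋆ c) - V ⋆ (x ▷ c)` make the two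
terms produced by `Δ x` combine to `x` times the original sum. Since `U` is generated by `ι L`,
the map is right multiplication by its value `1 ⋆ a = ι a` at `1`.
-/

open TensorProduct

namespace UniversalEnvelopingAlgebra

theorem adjoin_range_ι (R L : Type*) [CommRing R] [LieRing L] [LieAlgebra R L] :
    Algebra.adjoin R (Set.range (ι R : L → UniversalEnvelopingAlgebra R L)) = ⊤ := by
  have : (ι R : L → UniversalEnvelopingAlgebra R L) = mkAlgHom R L ∘ TensorAlgebra.ι R := rfl
  rw [this, Set.range_comp, ← AlgHom.map_adjoin, TensorAlgebra.adjoin_range_ι, Algebra.map_top,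
    AlgHom.range_eq_top]
  exact RingCon.mkₐ_surjective _

end UniversalEnvelopingAlgebra

theorem LinearMap.map_eq_smul_map_one_of_adjoin_eq_top {R A M : Type*} [CommSemiring R]
    [Semiring A] [Algebra R A] [AddCommMonoid M] [Module R M] [Module A M] [IsScalarTower R A M]
    {s : Set A} (hs : Algebra.adjoin R s = ⊤) (f : A →ₗ[R] M)
    (hf : ∀ x ∈ s, ∀ u, f (x * u) = x • f u) (u : A) : f u = u • f 1 := by
  suffices h : ∀ x ∈ Algebra.adjoin R s, ∀ u, f (x * u) = x • f u by
    simpa using h u (hs ▸ Algebra.mem_top) 1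
  intro x hx
  induction hx using Algebra.adjoin_induction with
  | mem x hx => exact hf x hx
  | algebraMap r => intro u; rw [← Algebra.smul_def, map_smul, algebraMap_smul]
  | add x y _ _ hx hy => intro u; rw [add_mul, map_add, hx, hy, add_smul]
  | mul x y _ _ hx hy => intro u; rw [mul_assoc, hx, hy, mul_smul]

section

variable {R A L : Type*} [CommRing R] [Ring A] [Algebra R A] [AddCommGroup L] [Module R L]

theorem lift_flip_applyₗ_comp_mul (st : A →ₗ[R] L →ₗ[R] A) (ρ : A →ₐ[R] Module.End R L) (a : L)
    {x : A} (hx : ∀ u b, st (x * u) b = x * st u b - st u (ρ x b)) (w : A ⊗[R] A) :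
    lift (st.flip ∘ₗ LinearMap.applyₗ a ∘ₗ ρ.toLinearMap) ((x ⊗ₜ 1 + 1 ⊗ₜ x) * w)
      = x * lift (st.flip ∘ₗ LinearMap.applyₗ a ∘ₗ ρ.toLinearMap) w := by
  induction w using TensorProduct.induction_on with
  | zero => simp
  | tmul y u => simp [add_mul, hx, map_mul]
  | add w₁ w₂ h₁ h₂ => rw [mul_add, map_add, h₁, h₂, map_add, mul_add]

theorem lift_comp_coproduct_eq_mul {s : Set A} (hs : Algebra.adjoin R s = ⊤)
    (Δ : A →ₐ[R] A ⊗[R] A) (hΔ : ∀ x ∈ s, Δ x = x ⊗ₜ 1 + 1 ⊗ₜ x)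
    (st : A →ₗ[R] L →ₗ[R] A) (ρ : A →ₐ[R] Module.End R L)
    (hst : ∀ x ∈ s, ∀ u b, st (x * u) b = x * st u b - st u (ρ x b)) (u : A) (a : L) :
    lift (st.flip ∘ₗ LinearMap.applyₗ a ∘ₗ ρ.toLinearMap) (Δ u) = u * st 1 a := by
  set φ := lift (st.flip ∘ₗ LinearMap.applyₗ a ∘ₗ ρ.toLinearMap)
  have hφΔ : ∀ x ∈ s, ∀ v, φ (Δ (x * v)) = x * φ (Δ v) := fun x hx v => by
    rw [map_mul, hΔ x hx, lift_flip_applyₗ_comp_mul st ρ a (hst x hx)]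
  have := (φ ∘ₗ Δ.toLinearMap).map_eq_smul_map_one_of_adjoin_eq_top hs hφΔ u
  simpa [φ, Algebra.TensorProduct.one_def] using this

end

open UniversalEnvelopingAlgebra TensorProduct in
theorem guinOudom_generalized_leibniz_general
    {R L : Type*} [CommRing R] [LieRing L] [LieAlgebra R L]
    (t : L →ₗ[R] L →ₗ[R] L)
    (Δ : UniversalEnvelopingAlgebra R L →ₐ[R]
      TensorProduct R (UniversalEnvelopingAlgebra R L) (UniversalEnvelopingAlgebra R L))
    (hΔ : ∀ a : L, Δ (ι R a) = ι R a ⊗ₜ[R] 1 + 1 ⊗ₜ[R] ι R a)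
    (st : UniversalEnvelopingAlgebra R L →ₗ[R] L →ₗ[R] UniversalEnvelopingAlgebra R L)
    (h1 : ∀ a : L, st 1 a = ι R a)
    (hrec : ∀ (a' : L) (u : UniversalEnvelopingAlgebra R L) (a : L),
      st (ι R a' * u) a = ι R a' * st u a - st u (t a' a))
    (ρ : UniversalEnvelopingAlgebra R L →ₐ[R] Module.End R L)
    (hρ : ∀ a b : L, ρ (ι R a) b = t a b) :
    ∀ (u : UniversalEnvelopingAlgebra R L) (a : L),
      u * ι R a
        = TensorProduct.lift
            (st.flip ∘ₗ (LinearMap.applyₗ a ∘ₗ ρ.toLinearMap)) (Δ u) := by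
  intro u a
  rw [lift_comp_coproduct_eq_mul (adjoin_range_ι R L) Δ (Set.forall_mem_range.2 hΔ) st ρ
    (Set.forall_mem_range.2 fun a' u b => by rw [hrec, hρ]) u a, h1]

open UniversalEnvelopingAlgebra TensorProduct in
/-- Let `(L,▷)` be a pre-Lie algebra, `U` its universal enveloping algebra,
`ρ : U → End(L)` the algebra-morphism extension of `a ↦ a▷·`, and `⋆` the Guin–Oudom
action. Then the generalized Leibniz rule holds:
`U·a = Σ U₍₂₎ ⋆ (ρ(U₍₁₎)a)` for all `a ∈ L` and `U ∈ U`, the sum being over the coproduct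
`Δ U = Σ U₍₁₎ ⊗ U₍₂₎`. -/
theorem guinOudom_generalized_leibniz
    {R L : Type*} [CommRing R] [LieRing L] [LieAlgebra R L]
    (t : L →ₗ[R] L →ₗ[R] L)
    (hpre : ∀ a b c : L, t a (t b c) - t (t a b) c = t b (t a c) - t (t b a) c)
    (hbr : ∀ a b : L, ⁅a, b⁆ = t a b - t b a)
    (Δ : UniversalEnvelopingAlgebra R L →ₐ[R]
      TensorProduct R (UniversalEnvelopingAlgebra R L) (UniversalEnvelopingAlgebra R L))
    (hΔ : ∀ a : L, Δ (ι R a) = ι R a ⊗ₜ[R] 1 + 1 ⊗ₜ[R] ι R a)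
    (st : UniversalEnvelopingAlgebra R L →ₗ[R] L →ₗ[R] UniversalEnvelopingAlgebra R L)
    (h1 : ∀ a : L, st 1 a = ι R a)
    (hrec : ∀ (a' : L) (u : UniversalEnvelopingAlgebra R L) (a : L),
      st (ι R a' * u) a = ι R a' * st u a - st u (t a' a))
    (ρ : UniversalEnvelopingAlgebra R L →ₐ[R] Module.End R L)
    (hρ : ∀ a b : L, ρ (ι R a) b = t a b) :
    ∀ (u : UniversalEnvelopingAlgebra R L) (a : L),
      u * ι R a
        = TensorProduct.lift
            (st.flip ∘ₗ (LinearMap.applyₗ a ∘ₗ ρ.toLinearMap)) (Δ u) :=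
  guinOudom_generalized_leibniz_general t Δ hΔ st h1 hrec ρ hρ
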